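/- arXiv:1605.07686 — 2 statements merged into one kernel-verified Lean document; each statement's English description precedes it below -/
import Mathlib

section
/- Let Y be a finite nonempty set and θ : Y → ℝ. If ε(y), y ∈ Y, are i.i.d. random variables each with Gumbel distribution with CDF F(t) = exp(−exp(−(t+c))) (c the Euler constant), then for each y ∈ Y the probability that y maximizes θ(y)+ε(y) equals exp(θ(y)) / Σ_{y'∈Y} exp(θ(y')). -/
/-! If `U` is uniform on `(0, 1)`, then `q U` with `q u = -log (-log u) - γ` is Gumbel, and
`F (q u + b) = u ^ exp (-b)`. Conditioning on `ε y = q u`, the other coordinates lose to it with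
probability `∏_{i ≠ y} F (q u + θ y - θ i) = u ^ S`, `S = ∑_{i ≠ y} exp (θ i - θ y)`, and
`∫₀¹ u ^ S du = 1 / (1 + S) = exp (θ y) / ∑ i, exp (θ i)`. -/

open MeasureTheory Real Set

noncomputable def gumbelCDF (t : ℝ) : ℝ := exp (-exp (-(t + eulerMascheroniConstant)))

noncomputable def gumbelQuantile (u : ℝ) : ℝ := -log (-log u) - eulerMascheroniConstant

noncomputable def gumbelMeasure : Measure ℝ :=
  (volume.restrict (Ioo (0 : ℝ) 1)).map gumbelQuantile

@[fun_prop]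
lemma continuous_gumbelCDF : Continuous gumbelCDF := by
  unfold gumbelCDF; fun_prop

lemma gumbelCDF_nonneg (t : ℝ) : 0 ≤ gumbelCDF t := (exp_pos _).le

lemma gumbelCDF_lt_one (t : ℝ) : gumbelCDF t < 1 :=
  exp_lt_one_iff.2 (neg_neg_iff_pos.2 (exp_pos _))

lemma measurable_gumbelQuantile : Measurable gumbelQuantile := by
  unfold gumbelQuantile; fun_prop

lemma gumbelQuantile_le_iff {u : ℝ} (hu : u ∈ Ioo (0 : ℝ) 1) (t : ℝ) :
    gumbelQuantile u ≤ t ↔ u ≤ gumbelCDF t := by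
  have hlog : 0 < -log u := neg_pos.2 (log_neg hu.1 hu.2)
  rw [gumbelQuantile, gumbelCDF, sub_le_iff_le_add, neg_le, le_log_iff_exp_le hlog,
    ← log_le_iff_le_exp hu.1]
  constructor <;> intro h <;> linarith

lemma gumbelCDF_gumbelQuantile_add {u : ℝ} (hu : u ∈ Ioo (0 : ℝ) 1) (b : ℝ) :
    gumbelCDF (gumbelQuantile u + b) = u ^ exp (-b) := by
  have hlog : 0 < -log u := neg_pos.2 (log_neg hu.1 hu.2)
  rw [gumbelCDF, gumbelQuantile, rpow_def_of_pos hu.1,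
    show -(-log (-log u) - eulerMascheroniConstant + b + eulerMascheroniConstant)
      = log (-log u) + -b by ring, exp_add, exp_log hlog]
  ring_nf

instance : IsProbabilityMeasure gumbelMeasure where
  measure_univ := by
    rw [gumbelMeasure, Measure.map_apply measurable_gumbelQuantile MeasurableSet.univ,
      preimage_univ, Measure.restrict_apply_univ, volume_Ioo, sub_zero, ENNReal.ofReal_one]

lemma gumbelMeasure_Iic (t : ℝ) : gumbelMeasure (Iic t) = ENNReal.ofReal (gumbelCDF t) := by
  have hpre : gumbelQuantile ⁻¹' Iic t ∩ Ioo 0 1 = Ioc 0 (gumbelCDF t) := by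
    ext u
    simp only [mem_inter_iff, mem_preimage, mem_Iic, mem_Ioc]
    refine ⟨fun ⟨hq, hu⟩ => ⟨hu.1, (gumbelQuantile_le_iff hu t).1 hq⟩, fun ⟨hu0, hut⟩ => ?_⟩
    have hu : u ∈ Ioo (0 : ℝ) 1 := ⟨hu0, hut.trans_lt (gumbelCDF_lt_one t)⟩
    exact ⟨(gumbelQuantile_le_iff hu t).2 hut, hu⟩
  rw [gumbelMeasure, Measure.map_apply measurable_gumbelQuantile measurableSet_Iic,
    Measure.restrict_apply (measurable_gumbelQuantile measurableSet_Iic), hpre,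
    volume_Ioc, sub_zero]

lemma map_eq_gumbelMeasure {Ω : Type*} [MeasurableSpace Ω] {μ : Measure Ω}
    [IsProbabilityMeasure μ] {X : Ω → ℝ} (hX : Measurable X)
    (hcdf : ∀ t, μ {ω | X ω ≤ t} = ENNReal.ofReal (gumbelCDF t)) :
    μ.map X = gumbelMeasure := by
  have : IsProbabilityMeasure (μ.map X) := Measure.isProbabilityMeasure_map hX.aemeasurable
  refine Measure.ext_of_Iic _ _ fun t => ?_
  rw [Measure.map_apply hX measurableSet_Iic, gumbelMeasure_Iic]
  exact hcdf t

lemma lintegral_Ioo_zero_one_rpow {S : ℝ} (hS : -1 < S) :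
    ∫⁻ u in Ioo (0 : ℝ) 1, ENNReal.ofReal (u ^ S) = ENNReal.ofReal (1 / (S + 1)) := by
  have hint : IntegrableOn (fun u : ℝ => u ^ S) (Ioo 0 1) := by
    rw [← intervalIntegrable_iff_integrableOn_Ioo_of_le zero_le_one]
    exact intervalIntegral.intervalIntegrable_rpow' hS
  have hnn : 0 ≤ᵐ[volume.restrict (Ioo (0 : ℝ) 1)] fun u : ℝ => u ^ S :=
    (ae_restrict_mem measurableSet_Ioo).mono fun u hu => rpow_nonneg hu.1.le _
  rw [← ofReal_integral_eq_lintegral_ofReal hint hnn, ← integral_Ioc_eq_integral_Ioo,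
    ← intervalIntegral.integral_of_le zero_le_one, integral_rpow (Or.inl hS),
    one_rpow, zero_rpow (by linarith), sub_zero]

lemma lintegral_gumbelMeasure_prod_Iic_add {ι : Type*} (s : Finset ι) (b : ι → ℝ) :
    ∫⁻ t, ∏ i ∈ s, gumbelMeasure (Iic (t + b i)) ∂gumbelMeasure
      = ENNReal.ofReal (1 / (∑ i ∈ s, exp (-b i) + 1)) := by
  have hmeas : Measurable fun t => ∏ i ∈ s, ENNReal.ofReal (gumbelCDF (t + b i)) := by
    fun_prop
  simp_rw [gumbelMeasure_Iic]
  rw [gumbelMeasure, lintegral_map hmeas measurable_gumbelQuantile,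
    ← lintegral_Ioo_zero_one_rpow
      (neg_one_lt_zero.trans_le (Finset.sum_nonneg fun i _ => (exp_pos _).le))]
  refine setLIntegral_congr_fun measurableSet_Ioo fun u hu => ?_
  rw [← ENNReal.ofReal_prod_of_nonneg fun i _ => gumbelCDF_nonneg _, rpow_sum_of_pos hu.1]
  simp_rw [gumbelCDF_gumbelQuantile_add hu]
lemma measurableSet_ofPred_forall_ne_le {Y : Type*} [Countable Y] (y : Y) {g : Y → ℝ → ℝ}
    (hg : ∀ i, Measurable (g i)) :
    MeasurableSet {x : Y → ℝ | ∀ i ≠ y, x i ≤ g i (x y)} := by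
  simp only [ofPred_forall]
  exact .iInter fun i => .iInter fun _ =>
    measurableSet_le (measurable_pi_apply i) ((hg i).comp (measurable_pi_apply y))

lemma Measure.pi_ofPred_forall_ne_le {Y : Type*} [Fintype Y] [DecidableEq Y] (ν : Measure ℝ)
    [SigmaFinite ν] (y : Y) {g : Y → ℝ → ℝ} (hg : ∀ i, Measurable (g i)) :
    Measure.pi (fun _ : Y => ν) {x | ∀ i ≠ y, x i ≤ g i (x y)}
      = ∫⁻ t, ∏ i ∈ Finset.univ.erase y, ν (Iic (g i t)) ∂ν := by
  set B : Set (({i // i = y} → ℝ) × ({i // i ≠ y} → ℝ)) :=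
    {z | ∀ i, z.2 i ≤ g i (z.1 default)} with hB_def
  have hB : MeasurableSet B := by
    simp only [hB_def, ofPred_forall]
    exact .iInter fun i => measurableSet_le (by fun_prop) ((hg i).comp (by fun_prop))
  have hpre : MeasurableEquiv.piEquivPiSubtypeProd (fun _ : Y => ℝ) (· = y) ⁻¹' B
      = {x | ∀ i ≠ y, x i ≤ g i (x y)} := by
    ext x
    simp only [MeasurableEquiv.piEquivPiSubtypeProd_apply, hB_def, ne_eq, Subtype.forall,
      preimage_ofPred_eq, mem_ofPred_eq]
    rfl
  have hsection : ∀ w,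
      Prod.mk w ⁻¹' B = Set.univ.pi fun i : {i // i ≠ y} => Iic (g i (w default)) := by
    intro w
    ext z
    simp [hB_def, Pi.le_def]
  rw [← hpre, (measurePreserving_piEquivPiSubtypeProd _ _).measure_preimage hB.nullMeasurableSet,
    Measure.prod_apply hB]
  simp_rw [hsection, Measure.pi_pi]
  -- `Measure.pi` on `{i // i = y}` is built from two different `Fintype` instances here.
  convert (measurePreserving_piUnique fun _ : {i // i = y} => ν).lintegral_comp_emb
    (MeasurableEquiv.measurableEmbedding _) (fun t => ∏ i ∈ Finset.univ.erase y, ν (Iic (g i t)))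
    using 2
  · congr
    exact Subsingleton.elim _ _
  · ext w
    rw [Finset.prod_subtype (Finset.univ.erase y) (p := (· ≠ y)) (by simp)]
    rfl

theorem gumbel_max_trick_general {Y : Type*} [Fintype Y]
    {Ω : Type*} [MeasurableSpace Ω] (μ : Measure Ω) [IsProbabilityMeasure μ]
    (θ : Y → ℝ) (ε : Y → Ω → ℝ) (hmeas : ∀ y, Measurable (ε y))
    (hindep : ProbabilityTheory.iIndepFun ε μ)
    (hcdf : ∀ y t, μ {ω | ε y ω ≤ t} =
      ENNReal.ofReal (Real.exp (-Real.exp (-(t + Real.eulerMascheroniConstant)))))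
    (y : Y) :
    μ {ω | ∀ y', θ y' + ε y' ω ≤ θ y + ε y ω} =
      ENNReal.ofReal (Real.exp (θ y) / ∑ y', Real.exp (θ y')) := by
  classical
  have hjoint : μ.map (fun ω i => ε i ω) = Measure.pi fun _ : Y => gumbelMeasure := by
    rw [hindep.map_fun_eq_pi_map fun i => (hmeas i).aemeasurable]
    simp_rw [map_eq_gumbelMeasure (hmeas _) (hcdf _)]
  have hevent : {ω | ∀ y', θ y' + ε y' ω ≤ θ y + ε y ω}
      = (fun ω i => ε i ω) ⁻¹' {x | ∀ i ≠ y, x i ≤ x y + (θ y - θ i)} := by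
    ext ω
    simp only [mem_ofPred_eq, mem_preimage]
    refine forall_congr' fun i => ⟨fun h _ => by linarith, fun h => ?_⟩
    rcases eq_or_ne i y with rfl | hi
    · exact le_rfl
    · linarith [h hi]
  have hshift : ∀ i, Measurable fun t : ℝ => t + (θ y - θ i) := fun i => measurable_add_const _
  have hsum : ∑ i, exp (θ i)
      = exp (θ y) * (∑ i ∈ Finset.univ.erase y, exp (-(θ y - θ i)) + 1) := by
    rw [← Finset.add_sum_erase _ _ (Finset.mem_univ y), mul_add, Finset.mul_sum]
    simp only [← exp_add, neg_sub, add_sub_cancel, mul_one]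
    ring
  rw [hevent, ← Measure.map_apply (measurable_pi_lambda _ hmeas)
      (measurableSet_ofPred_forall_ne_le y hshift), hjoint,
    Measure.pi_ofPred_forall_ne_le _ y hshift, lintegral_gumbelMeasure_prod_Iic_add, hsum,
    div_mul_cancel_left₀ (exp_pos _).ne', one_div]

/-- **Gumbel-max trick.** If `ε y`, for `y` in a finite nonempty set `Y`, are i.i.d.
random variables with the zero-mean Gumbel CDF `F t = exp (-exp (-(t + c)))`
(`c` the Euler–Mascheroni constant), then the probability that `y` maximizes
`θ y + ε y` equals `exp (θ y) / ∑ y', exp (θ y')`. -/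
theorem gumbel_max_trick {Y : Type*} [Fintype Y] [Nonempty Y]
    {Ω : Type*} [MeasurableSpace Ω] (μ : Measure Ω) [IsProbabilityMeasure μ]
    (θ : Y → ℝ) (ε : Y → Ω → ℝ) (hmeas : ∀ y, Measurable (ε y))
    (hindep : ProbabilityTheory.iIndepFun ε μ)
    (hcdf : ∀ y t, μ {ω | ε y ω ≤ t} =
      ENNReal.ofReal (Real.exp (-Real.exp (-(t + Real.eulerMascheroniConstant)))))
    (y : Y) :
    μ {ω | ∀ y', θ y' + ε y' ω ≤ θ y + ε y ω} =
      ENNReal.ofReal (Real.exp (θ y) / ∑ y', Real.exp (θ y')) :=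
  gumbel_max_trick_general μ θ ε hmeas hindep hcdf y
end

section
/- With the setup of the Local Perturb-and-MAP theorem (Y a finite product space, θ : Y → ℝ, disjoint blocks 𝓑, i.i.d. Gumbel perturbations per block), the expected number of block-coordinate-wise maxima of the perturbed potential ~θ equals Σ_{y∈Y} ∏_{β∈𝓑} p(y_β | y_{¬β}; θ). -/
/-!
By linearity of expectation the expected number of block-coordinate-wise maxima is the sum over
configurations `y` of the probability that `y` is one. As the blocks are disjoint, changing `y`
inside block `β k` only changes the perturbation of block `k`, so `y` is a maximum along `β k`
exactly when `z ↦ θ (y with block z) + ε k z` is maximised at `z = y|β k`. These events involve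
disjoint sets of independent perturbations, and by the Gumbel-max trick each has probability
`exp (θ y) / ∑ z, exp (θ (y with block z))`. The Gumbel-max trick in turn is a one-dimensional
integral: given the perturbation `t` of the winner, the other coordinates must lie below
`t + c i - c j`, the product of their Gumbel distribution functions is `exp (-V e⁻ᵗ)`, and the
Gumbel density times `exp (-V e⁻ᵗ)` is a multiple of another Gumbel density.
-/

open MeasureTheory Real Finset
open scoped Classical

/-- Replace the coordinates of `y` inside the block `B` by the values given by `z`. -/
def blockUpd {n : ℕ} {Y : Fin n → Type*} (B : Finset (Fin n)) (y : ∀ j, Y j)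
    (z : ∀ j : {j // j ∈ B}, Y j.1) : ∀ j, Y j :=
  fun j => if h : j ∈ B then z ⟨j, h⟩ else y j

open Set Filter Topology

/-- `∫⁻ g'` is the Lebesgue measure of the range of the monotone `g`, which lies in `[l, u]`. -/
lemma integrable_deriv_of_nonneg_of_tendsto {g g' : ℝ → ℝ} {l u : ℝ}
    (hderiv : ∀ x, HasDerivAt g (g' x) x) (hg' : ∀ x, 0 ≤ g' x)
    (hbot : Tendsto g atBot (𝓝 l)) (htop : Tendsto g atTop (𝓝 u)) : Integrable g' := by
  have hmono : Monotone g := monotone_of_hasDerivAt_nonneg hderiv hg'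
  have hrange : g '' univ ⊆ Icc l u := by
    rintro _ ⟨x, -, rfl⟩
    exact ⟨hmono.le_of_tendsto hbot x, hmono.ge_of_tendsto htop x⟩
  have hmeas : Measurable g' := by
    simpa only [funext fun x => (hderiv x).deriv] using measurable_deriv g
  have hvol := lintegral_deriv_eq_volume_image_of_monotoneOn MeasurableSet.univ
    (fun x _ => (hderiv x).hasDerivWithinAt) (hmono.monotoneOn _)
  rw [Measure.restrict_univ] at hvol
  refine ⟨hmeas.aestronglyMeasurable, ?_⟩
  rw [hasFiniteIntegral_iff_ofReal (Eventually.of_forall hg'), hvol]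
  exact (measure_mono hrange).trans_lt measure_Icc_lt_top

noncomputable section

def gumbelCDFReal (a t : ℝ) : ℝ := exp (-exp (-(t - a)))

def gumbelPDFReal (a t : ℝ) : ℝ := exp (-(t - a)) * exp (-exp (-(t - a)))

def gumbelReal (a : ℝ) : Measure ℝ :=
  volume.withDensity fun t => ENNReal.ofReal (gumbelPDFReal a t)

end

lemma gumbelCDFReal_pos (a t : ℝ) : 0 < gumbelCDFReal a t := exp_pos _

lemma gumbelCDFReal_eq_exp_neg_mul (a t : ℝ) :
    gumbelCDFReal a t = exp (-(exp a * exp (-t))) := by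
  rw [gumbelCDFReal, ← exp_add, neg_sub, sub_eq_add_neg]

lemma gumbelPDFReal_nonneg (a t : ℝ) : 0 ≤ gumbelPDFReal a t := by
  unfold gumbelPDFReal; positivity

lemma hasDerivAt_gumbelCDFReal (a t : ℝ) :
    HasDerivAt (gumbelCDFReal a) (gumbelPDFReal a t) t := by
  unfold gumbelCDFReal gumbelPDFReal
  convert (((hasDerivAt_id' t).sub_const a).fun_neg.exp.fun_neg).exp using 1
  ring

lemma tendsto_gumbelCDFReal_atBot (a : ℝ) : Tendsto (gumbelCDFReal a) atBot (𝓝 0) :=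
  tendsto_exp_atBot.comp <| tendsto_neg_atTop_atBot.comp <| tendsto_exp_atTop.comp <|
    tendsto_neg_atBot_atTop.comp <| tendsto_atBot_add_const_right _ (-a) tendsto_id

lemma tendsto_gumbelCDFReal_atTop (a : ℝ) : Tendsto (gumbelCDFReal a) atTop (𝓝 1) := by
  have h : Tendsto (fun t => -exp (-(t - a))) atTop (𝓝 (-0)) :=
    (tendsto_exp_atBot.comp <| tendsto_neg_atTop_atBot.comp <|
      tendsto_atTop_add_const_right _ (-a) tendsto_id).neg
  unfold gumbelCDFReal
  simpa [Function.comp_def] using (continuous_exp.tendsto _).comp h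

lemma integrable_gumbelPDFReal (a : ℝ) : Integrable (gumbelPDFReal a) :=
  integrable_deriv_of_nonneg_of_tendsto (hasDerivAt_gumbelCDFReal a) (gumbelPDFReal_nonneg a)
    (tendsto_gumbelCDFReal_atBot a) (tendsto_gumbelCDFReal_atTop a)

lemma gumbelReal_apply (a : ℝ) {s : Set ℝ} (hs : MeasurableSet s) :
    gumbelReal a s = ENNReal.ofReal (∫ t in s, gumbelPDFReal a t) := by
  rw [gumbelReal, withDensity_apply _ hs, ofReal_integral_eq_lintegral_ofReal
    (integrable_gumbelPDFReal a).integrableOn (Eventually.of_forall (gumbelPDFReal_nonneg a))]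

lemma gumbelReal_Iic (a t : ℝ) : gumbelReal a (Iic t) = ENNReal.ofReal (gumbelCDFReal a t) := by
  rw [gumbelReal_apply a measurableSet_Iic, integral_Iic_of_hasDerivAt_of_tendsto'
    (fun x _ => hasDerivAt_gumbelCDFReal a x) (integrable_gumbelPDFReal a).integrableOn
    (tendsto_gumbelCDFReal_atBot a), sub_zero]

instance (a : ℝ) : IsProbabilityMeasure (gumbelReal a) := by
  constructor
  rw [gumbelReal_apply a MeasurableSet.univ, Measure.restrict_univ,
    integral_of_hasDerivAt_of_tendsto (hasDerivAt_gumbelCDFReal a) (integrable_gumbelPDFReal a)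
      (tendsto_gumbelCDFReal_atBot a) (tendsto_gumbelCDFReal_atTop a)]
  simp

lemma eq_gumbelReal_of_Iic {ν : Measure ℝ} [IsProbabilityMeasure ν] {a : ℝ}
    (h : ∀ t, ν (Iic t) = ENNReal.ofReal (gumbelCDFReal a t)) : ν = gumbelReal a :=
  Measure.ext_of_Iic ν _ fun t => by rw [h, gumbelReal_Iic]

lemma gumbelPDFReal_mul_exp_neg_mul_exp_neg (a : ℝ) {v : ℝ} (hv : 0 ≤ v) (t : ℝ) :
    gumbelPDFReal a t * exp (-(v * exp (-t))) =
      exp a / (exp a + v) * gumbelPDFReal (log (exp a + v)) t := by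
  have hpos : 0 < exp a + v := by positivity
  simp only [gumbelPDFReal, neg_sub, exp_sub, exp_log hpos, exp_neg t]
  field_simp
  rw [← exp_add]
  ring_nf

lemma lintegral_exp_neg_mul_exp_neg_gumbelReal (a : ℝ) {v : ℝ} (hv : 0 ≤ v) :
    ∫⁻ t, ENNReal.ofReal (exp (-(v * exp (-t)))) ∂gumbelReal a =
      ENNReal.ofReal (exp a / (exp a + v)) := by
  have hmeas : Measurable (gumbelPDFReal a) := by
    unfold gumbelPDFReal; fun_prop
  have hmass : ∫⁻ t, ENNReal.ofReal (gumbelPDFReal (log (exp a + v)) t) = 1 := by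
    simpa [gumbelReal] using measure_univ (μ := gumbelReal (log (exp a + v)))
  rw [gumbelReal, lintegral_withDensity_eq_lintegral_mul₀ (by fun_prop) (by fun_prop)]
  have hratio : 0 ≤ exp a / (exp a + v) := by positivity
  simp_rw [Pi.mul_apply, ← ENNReal.ofReal_mul (gumbelPDFReal_nonneg a _),
    gumbelPDFReal_mul_exp_neg_mul_exp_neg a hv, ENNReal.ofReal_mul hratio]
  rw [lintegral_const_mul' _ _ ENNReal.ofReal_ne_top, hmass, mul_one]

lemma pi_setOf_forall_add_le_add {ι : Type*} [Fintype ι] (ν : Measure ℝ) [IsProbabilityMeasure ν]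
    (c : ι → ℝ) (i : ι) :
    Measure.pi (fun _ : ι => ν) {v | ∀ j, c j + v j ≤ c i + v i} =
      ∫⁻ t, ∏ j : {j // j ≠ i}, ν (Set.Iic (t + c i - c j)) ∂ν := by
  set T := {v : ι → ℝ | ∀ j, c j + v j ≤ c i + v i}
  have hT : MeasurableSet T := by
    simp only [T, Set.ofPred_forall]
    exact .iInter fun j => measurableSet_le (by fun_prop) (by fun_prop)
  let e := MeasurableEquiv.piEquivPiSubtypeProd (fun _ : ι => ℝ) (· = i)
  have hsection (x : {j // j = i} → ℝ) : Prod.mk x ⁻¹' (e.symm ⁻¹' T) =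
      Set.univ.pi fun j : {j // j ≠ i} => Set.Iic (x default + c i - c j) := by
    ext w
    have he_ne (j : ι) (hj : j ≠ i) : e.symm (x, w) j = w ⟨j, hj⟩ := dif_neg hj
    have he_eq : e.symm (x, w) i = x default := dif_pos rfl
    simp only [T, Set.mem_preimage, Set.mem_ofPred_eq, Set.mem_pi, Set.mem_univ, Set.mem_Iic,
      true_imp_iff, he_eq]
    constructor
    · intro h j
      linarith [he_ne j j.2 ▸ h j]
    · intro h j
      by_cases hj : j = i
      · rw [hj, he_eq]
      · linarith [he_ne j hj, h ⟨j, hj⟩]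
  rw [← (measurePreserving_piEquivPiSubtypeProd (fun _ => ν) (· = i)).symm.measure_preimage
    hT.nullMeasurableSet, Measure.prod_apply (hT.preimage e.symm.measurable)]
  simp_rw [hsection, Measure.pi_pi]
  convert (measurePreserving_funUnique ν {j // j = i}).lintegral_comp_emb
    (MeasurableEquiv.measurableEmbedding _)
    (fun t => ∏ j : {j // j ≠ i}, ν (Set.Iic (t + c i - c j)))
  rfl

lemma gumbelReal_pi_argmax {ι : Type*} [Fintype ι] (a : ℝ) (c : ι → ℝ) (i : ι) :
    Measure.pi (fun _ : ι => gumbelReal a) {v | ∀ j, c j + v j ≤ c i + v i} =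
      ENNReal.ofReal (exp (c i) / ∑ j, exp (c j)) := by
  set V := ∑ j : {j // j ≠ i}, exp (a - c i) * exp (c j)
  have hV : 0 ≤ V := by positivity
  have hprod (t : ℝ) : ∏ j : {j // j ≠ i}, gumbelCDFReal a (t + c i - c j) =
      exp (-(V * exp (-t))) := by
    simp_rw [V, gumbelCDFReal_eq_exp_neg_mul, ← exp_sum, Finset.sum_mul,
      ← Finset.sum_neg_distrib, ← exp_add]
    congr! 4 with j
    ring
  have hV_eq : V = exp a / exp (c i) * ∑ j : {j // j ≠ i}, exp (c j) := by
    simp_rw [V, ← Finset.mul_sum, exp_sub]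
  rw [pi_setOf_forall_add_le_add]
  simp_rw [gumbelReal_Iic, ← ENNReal.ofReal_prod_of_nonneg fun _ _ => (gumbelCDFReal_pos _ _).le,
    hprod, lintegral_exp_neg_mul_exp_neg_gumbelReal a hV, hV_eq,
    Fintype.sum_eq_add_sum_subtype_ne (fun j => exp (c j)) i]
  congr 1
  field_simp

namespace ProbabilityTheory

variable {Ω ι 𝓧 : Type*} [MeasurableSpace Ω] {μ : Measure Ω} [IsProbabilityMeasure μ]
  [MeasurableSpace 𝓧] [Fintype ι] {Z : ι → Type*} [∀ k, Fintype (Z k)] {X : ∀ k, Z k → Ω → 𝓧}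

lemma iIndepFun.map_fun_curry_eq_pi (hX : ∀ k z, Measurable (X k z))
    (hind : iIndepFun (fun p : Σ k, Z k => X p.1 p.2) μ) :
    μ.map (fun ω k z => X k z ω) = Measure.pi fun k => Measure.pi fun z => μ.map (X k z) := by
  have (k : ι) (z : Z k) : IsProbabilityMeasure (μ.map (X k z)) :=
    Measure.isProbabilityMeasure_map (hX k z).aemeasurable
  have hcurry : (fun ω k z => X k z ω) =
      MeasurableEquiv.piCurry (fun k (_ : Z k) => 𝓧) ∘ fun ω p => X p.1 p.2 ω := rfl
  rw [hcurry, ← Measure.map_map (MeasurableEquiv.measurable _) (by fun_prop),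
    hind.map_fun_eq_infinitePi_map (fun p => hX _ _),
    Measure.infinitePi_map_piCurry fun k z => μ.map (X k z)]
  simp_rw [Measure.infinitePi_eq_pi]

lemma iIndepFun.measure_forall_mem_eq_prod (hX : ∀ k z, Measurable (X k z))
    (hind : iIndepFun (fun p : Σ k, Z k => X p.1 p.2) μ) {ν : Measure 𝓧} [SigmaFinite ν]
    (hlaw : ∀ k z, μ.map (X k z) = ν) {T : ∀ k, Set (Z k → 𝓧)}
    (hT : ∀ k, MeasurableSet (T k)) :
    μ {ω | ∀ k, (fun z => X k z ω) ∈ T k} = ∏ k, Measure.pi (fun _ : Z k => ν) (T k) := by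
  have hjoint := hind.map_fun_curry_eq_pi hX
  simp_rw [hlaw] at hjoint
  rw [← Measure.pi_pi, ← hjoint, Measure.map_apply (by fun_prop) (.univ_pi hT)]
  simp [Set.preimage]

end ProbabilityTheory

lemma measure_forall_blockwise_argmax {Ω ι : Type*} [MeasurableSpace Ω] {μ : Measure Ω}
    [IsProbabilityMeasure μ] [Fintype ι] {Z : ι → Type*} [∀ k, Fintype (Z k)]
    {X : ∀ k, Z k → Ω → ℝ} (hX : ∀ k z, Measurable (X k z))
    (hind : ProbabilityTheory.iIndepFun (fun p : Σ k, Z k => X p.1 p.2) μ) {a : ℝ}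
    (hlaw : ∀ k z, μ.map (X k z) = gumbelReal a) (c : ∀ k, Z k → ℝ) (i : ∀ k, Z k) :
    μ {ω | ∀ k z, c k z + X k z ω ≤ c k (i k) + X k (i k) ω} =
      ∏ k, ENNReal.ofReal (exp (c k (i k)) / ∑ z, exp (c k z)) := by
  have hT (k : ι) : MeasurableSet {v : Z k → ℝ | ∀ z, c k z + v z ≤ c k (i k) + v (i k)} := by
    simp only [Set.ofPred_forall]
    exact .iInter fun z => measurableSet_le (by fun_prop) (by fun_prop)
  rw [← Finset.prod_congr rfl fun k _ => gumbelReal_pi_argmax a (c k) (i k),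
    ← hind.measure_forall_mem_eq_prod hX hlaw hT]
  rfl

lemma integral_card_filter {Ω α : Type*} [MeasurableSpace Ω] {μ : Measure Ω} [IsFiniteMeasure μ]
    [Fintype α] (P : α → Ω → Prop) [∀ ω, DecidablePred (P · ω)]
    (hP : ∀ a, MeasurableSet {ω | P a ω}) :
    ∫ ω, ((Finset.univ.filter (P · ω)).card : ℝ) ∂μ = ∑ a, μ.real {ω | P a ω} := by
  have hindicator (a : α) (ω : Ω) :
      (if P a ω then (1 : ℝ) else 0) = Set.indicator {ω | P a ω} 1 ω := by
    simp [Set.indicator_apply]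
  simp_rw [Finset.card_filter, Nat.cast_sum, Nat.cast_ite, Nat.cast_one, Nat.cast_zero,
    hindicator]
  rw [integral_finsetSum _ fun a _ => (integrable_const 1).indicator (hP a)]
  simp_rw [integral_indicator_one (hP _)]

section BlockUpdate

variable {n : ℕ} {Y : Fin n → Type*}

lemma blockUpd_restrict (B : Finset (Fin n)) (y : ∀ j, Y j) (z : ∀ j : {j // j ∈ B}, Y j.1) :
    (fun j : {j // j ∈ B} => blockUpd B y z j.1) = z :=
  funext fun j => dif_pos j.2

lemma blockUpd_restrict_of_disjoint {B B' : Finset (Fin n)} (h : Disjoint B' B) (y : ∀ j, Y j)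
    (z : ∀ j : {j // j ∈ B}, Y j.1) :
    (fun j : {j // j ∈ B'} => blockUpd B y z j.1) = fun j : {j // j ∈ B'} => y j.1 :=
  funext fun j => dif_neg (Finset.disjoint_left.mp h j.2)

lemma blockUpd_restrict_self (B : Finset (Fin n)) (y : ∀ j, Y j) :
    blockUpd B y (fun j => y j.1) = y :=
  funext fun j => by unfold blockUpd; split_ifs <;> rfl

lemma add_sum_blockUpd_le_iff {ι : Type*} [Fintype ι] {β : ι → Finset (Fin n)}
    (hdisj : ∀ k l, k ≠ l → Disjoint (β k) (β l)) (θ : (∀ j, Y j) → ℝ)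
    (ε : ∀ k, (∀ j : {j // j ∈ β k}, Y j.1) → ℝ) (k : ι) (y : ∀ j, Y j)
    (z : ∀ j : {j // j ∈ β k}, Y j.1) :
    θ (blockUpd (β k) y z) + ∑ l, ε l (fun j => blockUpd (β k) y z j.1) ≤
        θ y + ∑ l, ε l (fun j => y j.1) ↔
      θ (blockUpd (β k) y z) + ε k z ≤ θ y + ε k (fun j => y j.1) := by
  have hdiff : ∑ l, ε l (fun j => blockUpd (β k) y z j.1) - ∑ l, ε l (fun j => y j.1) =
      ε k z - ε k (fun j => y j.1) := by
    rw [← Finset.sum_sub_distrib, Finset.sum_eq_single k, blockUpd_restrict]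
    · intro l _ hlk
      rw [blockUpd_restrict_of_disjoint (hdisj l k hlk), sub_self]
    · simp
  constructor <;> intro h <;> linarith

end BlockUpdate

theorem expected_num_local_maxima_general {n m : ℕ} {Y : Fin n → Type*}
    [∀ j, Fintype (Y j)]
    (θ : (∀ j, Y j) → ℝ)
    (β : Fin m → Finset (Fin n))
    (hdisj : ∀ k l, k ≠ l → Disjoint (β k) (β l))
    {Ω : Type*} [MeasurableSpace Ω] (μ : Measure Ω) [IsProbabilityMeasure μ]
    (ε : (k : Fin m) → ((j : {j // j ∈ β k}) → Y j.1) → Ω → ℝ)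
    (hmeas : ∀ k z, Measurable (ε k z))
    (hindep : ProbabilityTheory.iIndepFun
      (m := fun _ : Σ k : Fin m, ((j : {j // j ∈ β k}) → Y j.1) =>
        (inferInstance : MeasurableSpace ℝ))
      (fun p => ε p.1 p.2) μ)
    (hcdf : ∀ k z t, μ {ω | ε k z ω ≤ t} =
      ENNReal.ofReal (Real.exp (-Real.exp (-(t + Real.eulerMascheroniConstant))))) :
    ∫ ω, ((Finset.univ.filter (fun y : ∀ j, Y j =>
        ∀ k, ∀ z : (j : {j // j ∈ β k}) → Y j.1,
          θ (blockUpd (β k) y z) + ∑ l, ε l (fun j => blockUpd (β k) y z j.1) ω ≤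
            θ y + ∑ l, ε l (fun j => y j.1) ω)).card : ℝ) ∂μ =
      ∑ y : ∀ j, Y j, ∏ k, (Real.exp (θ y) /
        ∑ z : (j : {j // j ∈ β k}) → Y j.1, Real.exp (θ (blockUpd (β k) y z))) := by
  have hlaw (k) (z) : μ.map (ε k z) = gumbelReal (-eulerMascheroniConstant) := by
    have := Measure.isProbabilityMeasure_map (μ := μ) (hmeas k z).aemeasurable
    refine eq_gumbelReal_of_Iic fun t => ?_
    rw [Measure.map_apply (hmeas k z) measurableSet_Iic, gumbelCDFReal, sub_neg_eq_add]
    exact hcdf k z t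
  rw [integral_card_filter]
  · refine Finset.sum_congr rfl fun y _ => ?_
    have hevent : {ω | ∀ k, ∀ z : (j : {j // j ∈ β k}) → Y j.1,
          θ (blockUpd (β k) y z) + ∑ l, ε l (fun j => blockUpd (β k) y z j.1) ω ≤
            θ y + ∑ l, ε l (fun j => y j.1) ω} =
        {ω | ∀ k, ∀ z : (j : {j // j ∈ β k}) → Y j.1, θ (blockUpd (β k) y z) + ε k z ω ≤
          θ (blockUpd (β k) y fun j => y j.1) + ε k (fun j => y j.1) ω} := by
      ext ω
      simp only [Set.mem_ofPred_eq, blockUpd_restrict_self]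
      exact forall_congr' fun k => forall_congr' fun z =>
        add_sum_blockUpd_le_iff hdisj θ (fun l z => ε l z ω) k y z
    rw [measureReal_def, hevent, measure_forall_blockwise_argmax hmeas hindep hlaw,
      ENNReal.toReal_prod]
    simp_rw [blockUpd_restrict_self]
    exact Finset.prod_congr rfl fun k _ => ENNReal.toReal_ofReal (by positivity)
  · intro y
    simp only [Set.ofPred_forall]
    exact .iInter fun k => .iInter fun z => measurableSet_le (by fun_prop) (by fun_prop)

/-- **Expected number of block-coordinate-wise maxima.** In the Local Perturb-and-MAP
setting, the expected cardinality of the random set of block-coordinate-wise maxima of the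
perturbed potential equals `∑ y, ∏ k, p(y_{β k} | y_{¬β k}; θ)`. -/
theorem expected_num_local_maxima {n m : ℕ} {Y : Fin n → Type*}
    [∀ j, Fintype (Y j)] [∀ j, Nonempty (Y j)] [∀ j, DecidableEq (Y j)]
    (θ : (∀ j, Y j) → ℝ)
    (β : Fin m → Finset (Fin n))
    (hdisj : ∀ k l, k ≠ l → Disjoint (β k) (β l))
    {Ω : Type*} [MeasurableSpace Ω] (μ : Measure Ω) [IsProbabilityMeasure μ]
    (ε : (k : Fin m) → ((j : {j // j ∈ β k}) → Y j.1) → Ω → ℝ)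
    (hmeas : ∀ k z, Measurable (ε k z))
    (hindep : ProbabilityTheory.iIndepFun
      (m := fun _ : Σ k : Fin m, ((j : {j // j ∈ β k}) → Y j.1) =>
        (inferInstance : MeasurableSpace ℝ))
      (fun p => ε p.1 p.2) μ)
    (hcdf : ∀ k z t, μ {ω | ε k z ω ≤ t} =
      ENNReal.ofReal (Real.exp (-Real.exp (-(t + Real.eulerMascheroniConstant))))) :
    ∫ ω, ((Finset.univ.filter (fun y : ∀ j, Y j =>
        ∀ k, ∀ z : (j : {j // j ∈ β k}) → Y j.1,
          θ (blockUpd (β k) y z) + ∑ l, ε l (fun j => blockUpd (β k) y z j.1) ω ≤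
            θ y + ∑ l, ε l (fun j => y j.1) ω)).card : ℝ) ∂μ =
      ∑ y : ∀ j, Y j, ∏ k, (Real.exp (θ y) /
        ∑ z : (j : {j // j ∈ β k}) → Y j.1, Real.exp (θ (blockUpd (β k) y z))) :=
  expected_num_local_maxima_general θ β hdisj μ ε hmeas hindep hcdf
end
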